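/- arXiv:2510.20184 — 10 statements merged into one kernel-verified Lean document; each statement's English description precedes it below -/
import Mathlib

section
/- Let X ⊆ ℝⁿ be a nonempty, compact, convex set with homogenization X̃, and let E be a finite index set. Let a ∈ ℝ and b : E → ℝ. Suppose y_v ∈ {0, 1} and y : E → ℝ with y(e) ∈ {0, 1} and y(e) ≤ y_v for every e ∈ E, let z ∈ ℝⁿ satisfy (z, y_v) ∈ X̃, and let zᵉ : E → ℝⁿ satisfy zᵉ(e) = y(e) • z for every e ∈ E. If a·y_v + ∑_{e ∈ E} b(e)·y(e) ≥ 0, then (a • z + ∑_{e ∈ E} b(e) • zᵉ(e), a·y_v + ∑_{e ∈ E} b(e)·y(e)) ∈ X̃. -/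
open Pointwise

/-- The homogenization of a set `X ⊆ ℝⁿ`:
`X̃ = {(x, y) : y ≥ 0 and x ∈ y • X}`. -/
def homogenization {n : ℕ} (X : Set (Fin n → ℝ)) : Set ((Fin n → ℝ) × ℝ) :=
  {p | 0 ≤ p.2 ∧ p.1 ∈ p.2 • X}

/-- Valid-constraint generation (pointwise form of Lemma 1): a linear inequality in the
binary variables of a vertex and its incident edges yields a valid homogenized convex
constraint. -/
theorem valid_constraint_generation {n : ℕ} (X : Set (Fin n → ℝ))
    (hne : X.Nonempty) (hcomp : IsCompact X) (hconv : Convex ℝ X)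
    (E : Type*) [Fintype E] (a : ℝ) (b : E → ℝ)
    (yv : ℝ) (hyv : yv = 0 ∨ yv = 1)
    (y : E → ℝ) (hy : ∀ e, y e = 0 ∨ y e = 1) (hyle : ∀ e, y e ≤ yv)
    (z : Fin n → ℝ) (hz : (z, yv) ∈ homogenization X)
    (ze : E → (Fin n → ℝ)) (hze : ∀ e, ze e = y e • z)
    (hineq : a * yv + ∑ e, b e * y e ≥ 0) :
    (a • z + ∑ e, b e • ze e, a * yv + ∑ e, b e * y e) ∈ homogenization X := by
  obtain ⟨hy0, hzX⟩ := hz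
  have key : a • z + ∑ e, b e • ze e = (a * yv + ∑ e, b e * y e) • z := by
    rcases hyv with h0 | h1
    · -- all y e = 0
      have hyz : ∀ e, y e = 0 := fun e => by
        rcases hy e with h | h
        · exact h
        · exfalso; have := hyle e; rw [h, h0] at this; linarith
      -- z = 0 since z ∈ 0 • X
      have hz0 : z = 0 := by
        rw [h0, Set.zero_smul_set hne] at hzX
        simpa using hzX
      simp [hz0, hze, hyz]
    · simp only [hze]
      rw [add_smul, Finset.sum_smul]
      congr 1
      · rw [h1, mul_one]
      · exact Finset.sum_congr rfl fun e _ => (mul_smul (b e) (y e) z).symm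
  refine ⟨hineq, ?_⟩
  simp only [key]
  rcases hyv with h0 | h1
  · have hz0 : z = 0 := by
      rw [h0, Set.zero_smul_set hne] at hzX
      simpa using hzX
    have hc : a * yv + ∑ e, b e * y e = a * yv + ∑ e, b e * y e := rfl
    -- z = 0, so need 0 ∈ c • X; since all y e = 0 and yv = 0, c = 0
    have hyz : ∀ e, y e = 0 := fun e => by
      rcases hy e with h | h
      · exact h
      · exfalso; have := hyle e; rw [h, h0] at this; linarith
    have hcz : a * yv + ∑ e, b e * y e = 0 := by simp [h0, hyz]
    rw [hcz, Set.zero_smul_set hne]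
    simp [hz0]
  · have hzX' : z ∈ X := by
      rw [h1, one_smul] at hzX; exact hzX
    exact Set.smul_mem_smul_set hzX'
end

section
/- Let X ⊆ ℝⁿ be a nonempty, compact, convex set with homogenization X̃, and let E be a finite index set. Let a ∈ ℝ and b : E → ℝ. Suppose y_v ∈ {0, 1} and y : E → ℝ with y(e) ∈ {0, 1} and y(e) ≤ y_v for every e ∈ E, let z ∈ ℝⁿ satisfy (z, y_v) ∈ X̃, and let zᵉ : E → ℝⁿ satisfy zᵉ(e) = y(e) • z for every e ∈ E. If a·y_v + ∑_{e ∈ E} b(e)·y(e) = 0, then a • z + ∑_{e ∈ E} b(e) • zᵉ(e) = 0. -/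
open Pointwise

/-- Constraint generation for equalities (pointwise form of Corollary 1): a valid linear
equality in the binary variables of a vertex and its incident edges yields a valid
linear equality in the continuous variables. -/
theorem valid_constraint_generation_eq {n : ℕ} (X : Set (Fin n → ℝ))
    (hne : X.Nonempty) (hcomp : IsCompact X) (hconv : Convex ℝ X)
    (E : Type*) [Fintype E] (a : ℝ) (b : E → ℝ)
    (yv : ℝ) (hyv : yv = 0 ∨ yv = 1)
    (y : E → ℝ) (hy : ∀ e, y e = 0 ∨ y e = 1) (hyle : ∀ e, y e ≤ yv)
    (z : Fin n → ℝ) (hz : (z, yv) ∈ homogenization X)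
    (ze : E → (Fin n → ℝ)) (hze : ∀ e, ze e = y e • z)
    (heq : a * yv + ∑ e, b e * y e = 0) :
    a • z + ∑ e, b e • ze e = 0 := by
  have key : a • z + ∑ e, b e • ze e = (a * yv + ∑ e, b e * y e) • z := by
    rcases hyv with h0 | h1
    · -- yv = 0, so z = 0
      have hzmem := hz.2
      simp only [h0] at hzmem
      rw [Set.zero_smul_set hne] at hzmem
      have hz0 : z = 0 := hzmem
      simp [hze, hz0]
    · rw [add_smul, Finset.sum_smul, h1, mul_one]
      congr 1
      exact Finset.sum_congr rfl fun e _ => by rw [hze, mul_smul]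
  rw [key, heq, zero_smul]
end

section
/- Let X ⊆ ℝⁿ be a nonempty, compact, convex set with homogenization X̃, let E and I be finite index sets, let a_i ∈ ℝ and b_i : E → ℝ for each i ∈ I, and let λ : I → ℝ with λ(i) ≥ 0 for all i ∈ I. Define a = ∑_{i ∈ I} λ(i)·a_i and b(e) = ∑_{i ∈ I} λ(i)·b_i(e) for each e ∈ E. Let y_v ∈ ℝ, y : E → ℝ, z ∈ ℝⁿ, and zᵉ : E → ℝⁿ be arbitrary. If for every i ∈ I one has (a_i • z + ∑_{e ∈ E} b_i(e) • zᵉ(e), a_i·y_v + ∑_{e ∈ E} b_i(e)·y(e)) ∈ X̃, then (a • z + ∑_{e ∈ E} b(e) • zᵉ(e), a·y_v + ∑_{e ∈ E} b(e)·y(e)) ∈ X̃. -/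
/- For nonempty convex `X` the homogenization is a pointed convex cone: `0 • X = {0}`, and
`t₁ • X + t₂ • X = (t₁ + t₂) • X` for `t₁, t₂ ≥ 0` gives closure under addition. The combined
constraint depends linearly on the coefficients `(a, b)`, so it is the `lam`-combination of the
individual constraints and lies in the cone. -/

open Pointwise

section Homogenization

variable {n : ℕ} {X : Set (Fin n → ℝ)}

theorem zero_mem_homogenization (hne : X.Nonempty) :
    (0 : (Fin n → ℝ) × ℝ) ∈ homogenization X :=
  ⟨le_rfl, show (0 : Fin n → ℝ) ∈ (0 : ℝ) • X by
    rw [Set.zero_smul_set hne]; rfl⟩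

theorem smul_mem_homogenization {c : ℝ} (hc : 0 ≤ c) {p : (Fin n → ℝ) × ℝ}
    (hp : p ∈ homogenization X) : c • p ∈ homogenization X :=
  ⟨mul_nonneg hc hp.1, by
    rw [Prod.smul_snd, smul_eq_mul, ← smul_smul]
    exact Set.smul_mem_smul_set hp.2⟩

theorem add_mem_homogenization (hconv : Convex ℝ X) {p q : (Fin n → ℝ) × ℝ}
    (hp : p ∈ homogenization X) (hq : q ∈ homogenization X) : p + q ∈ homogenization X :=
  ⟨add_nonneg hp.1 hq.1, by
    rw [Prod.snd_add, hconv.add_smul hp.1 hq.1]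
    exact Set.add_mem_add hp.2 hq.2⟩

def homogenizationCone (hne : X.Nonempty) (hconv : Convex ℝ X) :
    PointedCone ℝ ((Fin n → ℝ) × ℝ) where
  carrier := homogenization X
  zero_mem' := zero_mem_homogenization hne
  add_mem' := add_mem_homogenization hconv
  smul_mem' c _ hp := smul_mem_homogenization c.2 hp

end Homogenization

theorem sum_mul_smul_add_sum_sum_mul_smul {R M E I : Type*} [CommSemiring R] [AddCommMonoid M]
    [Module R M] [Fintype E] [Fintype I] (lam a : I → R) (b : I → E → R) (z : M) (ze : E → M) :
    (∑ i, lam i * a i) • z + ∑ e, (∑ i, lam i * b i e) • ze e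
      = ∑ i, lam i • (a i • z + ∑ e, b i e • ze e) := by
  simp only [Finset.sum_smul, smul_add, Finset.smul_sum, mul_smul, Finset.sum_add_distrib]
  rw [Finset.sum_comm (γ := E)]

theorem redundancy_preservation_general {n : ℕ} (X : Set (Fin n → ℝ))
    (hne : X.Nonempty) (hconv : Convex ℝ X)
    (E I : Type*) [Fintype E] [Fintype I]
    (a : I → ℝ) (b : I → E → ℝ) (lam : I → ℝ) (hlam : ∀ i, 0 ≤ lam i)
    (yv : ℝ) (y : E → ℝ) (z : Fin n → ℝ) (ze : E → (Fin n → ℝ))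
    (h : ∀ i, (a i • z + ∑ e, b i e • ze e,
        a i * yv + ∑ e, b i e * y e) ∈ homogenization X) :
    ((∑ i, lam i * a i) • z + ∑ e, (∑ i, lam i * b i e) • ze e,
      (∑ i, lam i * a i) * yv + ∑ e, (∑ i, lam i * b i e) * y e)
      ∈ homogenization X := by
  have hcomb : ((∑ i, lam i * a i) • z + ∑ e, (∑ i, lam i * b i e) • ze e,
      (∑ i, lam i * a i) * yv + ∑ e, (∑ i, lam i * b i e) * y e)
      = ∑ i, lam i • (a i • z + ∑ e, b i e • ze e, a i * yv + ∑ e, b i e * y e) := by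
    ext1
    · simp only [Prod.fst_sum, Prod.smul_fst]
      exact sum_mul_smul_add_sum_sum_mul_smul lam a b z ze
    · simp only [Prod.snd_sum, Prod.smul_snd]
      exact sum_mul_smul_add_sum_sum_mul_smul lam a b yv y
  rw [hcomb]
  exact (homogenizationCone hne hconv).sum_mem fun i _ =>
    (homogenizationCone hne hconv).smul_mem (hlam i) (h i)

/-- Redundancy preservation (Proposition 1): the homogenized constraint generated from a
nonnegative combination of linear inequalities is implied by the homogenized constraints
generated from those inequalities. -/
theorem redundancy_preservation {n : ℕ} (X : Set (Fin n → ℝ))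
    (hne : X.Nonempty) (hcomp : IsCompact X) (hconv : Convex ℝ X)
    (E I : Type*) [Fintype E] [Fintype I]
    (a : I → ℝ) (b : I → E → ℝ) (lam : I → ℝ) (hlam : ∀ i, 0 ≤ lam i)
    (yv : ℝ) (y : E → ℝ) (z : Fin n → ℝ) (ze : E → (Fin n → ℝ))
    (h : ∀ i, (a i • z + ∑ e, b i e • ze e,
        a i * yv + ∑ e, b i e * y e) ∈ homogenization X) :
    ((∑ i, lam i * a i) • z + ∑ e, (∑ i, lam i * b i e) • ze e,
      (∑ i, lam i * a i) * yv + ∑ e, (∑ i, lam i * b i e) * y e)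
      ∈ homogenization X :=
  redundancy_preservation_general X hne hconv E I a b lam hlam yv y z ze h
end

section
/- Let E be a finite index set, let a, c ∈ ℝ and b : E → ℝ, and let S be a set of pairs (y_v, y) with y_v ∈ ℝ and y : E → ℝ, such that every (y_v, y) ∈ S satisfies y_v ∈ {0, 1}, y(e) ∈ {0, 1}, and y(e) ≤ y_v for all e ∈ E. Suppose a·y_v + ∑_{e ∈ E} b(e)·y(e) + c ≥ 0 for every (y_v, y) ∈ S. Then (a + c)·y_v + ∑_{e ∈ E} b(e)·y(e) ≥ 0 for every (y_v, y) ∈ S; moreover, if c < 0, then y_v = 1 for every (y_v, y) ∈ S. -/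
/-- Validity part of Lemma 2 (from affine to linear inequalities): an affine inequality,
valid over a set of binary vectors satisfying the subgraph inequalities `y e ≤ y_v`,
implies the validity of its linearization, and forces `y_v = 1` when `c < 0`. -/
theorem affine_to_linear_validity (E : Type*) [Fintype E] (a c : ℝ) (b : E → ℝ)
    (S : Set (ℝ × (E → ℝ)))
    (hbin : ∀ p ∈ S, (p.1 = 0 ∨ p.1 = 1) ∧
      ∀ e, (p.2 e = 0 ∨ p.2 e = 1) ∧ p.2 e ≤ p.1)
    (hvalid : ∀ p ∈ S, a * p.1 + ∑ e, b e * p.2 e + c ≥ 0) :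
    (∀ p ∈ S, (a + c) * p.1 + ∑ e, b e * p.2 e ≥ 0) ∧
      (c < 0 → ∀ p ∈ S, p.1 = 1) := by
  have key : ∀ p ∈ S, p.1 = 0 → (∀ e, p.2 e = 0) ∧ c ≥ 0 := by
    intro p hp h0
    have hz : ∀ e, p.2 e = 0 := by
      intro e
      rcases (hbin p hp).2 e with ⟨h01, hle⟩
      rcases h01 with h | h
      · exact h
      · rw [h0] at hle; linarith
    refine ⟨hz, ?_⟩
    have := hvalid p hp
    have : a * p.1 + ∑ e, b e * p.2 e + c = c := by
      rw [h0]; simp [hz]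
    linarith [hvalid p hp, this]
  constructor
  · intro p hp
    rcases (hbin p hp).1 with h0 | h1
    · rcases key p hp h0 with ⟨hz, hc⟩
      rw [h0]
      simp [hz]
    · have := hvalid p hp
      rw [h1] at this ⊢
      linarith
  · intro hc p hp
    rcases (hbin p hp).1 with h0 | h1
    · exact absurd (key p hp h0).2 (by linarith)
    · exact h1
end

section
/- Let X ⊆ ℝⁿ be a nonempty, compact, convex set with homogenization X̃. Let y_v, y_e ∈ {0, 1} with y_e ≤ y_v, and let z, zᵉ ∈ ℝⁿ. If (zᵉ, y_e) ∈ X̃ and (z − zᵉ, y_v − y_e) ∈ X̃, then zᵉ = y_e • z. -/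
open Pointwise

/-- Key step of Theorem 1 (MICP correctness): for binary values of `y_v` and `y_e`
satisfying the subgraph inequality `y_e ≤ y_v`, the two homogenized convex constraints
recover the bilinear equality `zᵉ = y_e • z`. -/
theorem micp_recovers_bilinear {n : ℕ} (X : Set (Fin n → ℝ))
    (hne : X.Nonempty) (hcomp : IsCompact X) (hconv : Convex ℝ X)
    (yv ye : ℝ) (hyv : yv = 0 ∨ yv = 1) (hye : ye = 0 ∨ ye = 1) (hle : ye ≤ yv)
    (z ze : Fin n → ℝ)
    (h1 : (ze, ye) ∈ homogenization X)
    (h2 : (z - ze, yv - ye) ∈ homogenization X) :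
    ze = ye • z := by
  rcases hye with h0 | h1'
  · subst h0
    obtain ⟨-, hz⟩ := h1
    rw [Set.zero_smul_set hne] at hz
    simp_all
  · subst h1'
    have hyv1 : yv = 1 := by rcases hyv with h | h <;> linarith
    subst hyv1
    obtain ⟨-, hz⟩ := h2
    norm_num at hz
    rw [Set.zero_smul_set hne] at hz
    have : z - ze = 0 := hz
    have : ze = z := by
      funext i; have := congrFun this i; simp at this; linarith
    simp [this]
end

section
/- Let K ⊆ ℝᵐ be a closed convex cone, let C : ℝⁿ → ℝᵐ be a linear map, let d ∈ ℝᵐ, and let X = {x ∈ ℝⁿ : C x + d ∈ K} be nonempty. Then the topological closure of the set {(x, y) ∈ ℝⁿ × ℝ : y ≥ 0 and x ∈ y • X} equals {(x, y) ∈ ℝⁿ × ℝ : y ≥ 0 and C x + y • d ∈ K}. -/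
open Pointwise Filter Topology

/-- Homogenization of a nonempty set in conic form: the closure of
`{(x, y) : y ≥ 0 and x ∈ y • X}` with `X = {x : C x + d ∈ K}` equals
`{(x, y) : y ≥ 0 and C x + y • d ∈ K}`. -/
theorem homogenization_of_conic_form {n m : ℕ} (K : Set (Fin m → ℝ))
    (hKcl : IsClosed K) (hKconv : Convex ℝ K) (hK0 : (0 : Fin m → ℝ) ∈ K)
    (hKcone : ∀ t : ℝ, 0 ≤ t → ∀ k ∈ K, t • k ∈ K)
    (C : (Fin n → ℝ) →ₗ[ℝ] (Fin m → ℝ)) (d : Fin m → ℝ)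
    (hne : {x | C x + d ∈ K}.Nonempty) :
    closure {p : (Fin n → ℝ) × ℝ | 0 ≤ p.2 ∧ p.1 ∈ p.2 • {x | C x + d ∈ K}} =
      {p : (Fin n → ℝ) × ℝ | 0 ≤ p.2 ∧ C p.1 + p.2 • d ∈ K} := by
  obtain ⟨x₀, hx₀⟩ := hne
  have hKadd : ∀ a ∈ K, ∀ b ∈ K, a + b ∈ K := by
    intro a ha b hb
    have h := hKconv ha hb (by norm_num : (0:ℝ) ≤ 1/2) (by norm_num : (0:ℝ) ≤ 1/2)
      (by norm_num)
    have h2 := hKcone 2 (by norm_num) _ h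
    have : (2:ℝ) • ((1/2 : ℝ) • a + (1/2 : ℝ) • b) = a + b := by
      rw [smul_add, smul_smul, smul_smul]; norm_num
    rwa [this] at h2
  apply Set.Subset.antisymm
  · apply closure_minimal
    · rintro ⟨x, y⟩ ⟨hy, x', hx', heq⟩
      refine ⟨hy, ?_⟩
      simp only at heq
      rw [← heq]
      have : C (y • x') + y • d = y • (C x' + d) := by
        rw [map_smul, smul_add]
      rw [this]
      exact hKcone y hy _ hx'
    · have hC : Continuous C := C.continuous_of_finiteDimensional
      have hf : Continuous fun p : (Fin n → ℝ) × ℝ => C p.1 + p.2 • d :=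
        (hC.comp continuous_fst).add (continuous_snd.smul continuous_const)
      exact (isClosed_Ici.preimage continuous_snd).inter (hKcl.preimage hf)
  · rintro ⟨x, y⟩ ⟨hy, hxy⟩
    rcases eq_or_lt_of_le hy with rfl | hypos
    · -- y = 0 case
      simp only [zero_smul, add_zero] at hxy
      have hmem : ∀ ε : ℝ, 0 < ε →
          (x + ε • x₀, ε) ∈ {p : (Fin n → ℝ) × ℝ | 0 ≤ p.2 ∧
            p.1 ∈ p.2 • {x | C x + d ∈ K}} := by
        intro ε hε
        refine ⟨le_of_lt hε, ε⁻¹ • x + x₀, ?_, ?_⟩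
        · show C (ε⁻¹ • x + x₀) + d ∈ K
          have : C (ε⁻¹ • x + x₀) + d = ε⁻¹ • C x + (C x₀ + d) := by
            rw [map_add, map_smul, add_assoc]
          rw [this]
          exact hKadd _ (hKcone _ (inv_nonneg.mpr hε.le) _ hxy) _ hx₀
        · show ε • (ε⁻¹ • x + x₀) = x + ε • x₀
          rw [smul_add, smul_smul, mul_inv_cancel₀ hε.ne', one_smul]
      have h1 : Tendsto (fun ε : ℝ => (x + ε • x₀, ε)) (𝓝[>] 0) (𝓝 (x, 0)) := by
        have hc : Continuous fun ε : ℝ => ((x + ε • x₀, ε) : (Fin n → ℝ) × ℝ) :=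
          (continuous_const.add (continuous_id.smul continuous_const)).prodMk
            continuous_id
        have := hc.tendsto 0
        simp only [zero_smul, add_zero] at this
        exact this.mono_left nhdsWithin_le_nhds
      refine mem_closure_of_tendsto h1 ?_
      filter_upwards [self_mem_nhdsWithin] with ε hε
      exact hmem ε hε
    · exact subset_closure ⟨hy, y⁻¹ • x, by
        show C (y⁻¹ • x) + d ∈ K
        have : C (y⁻¹ • x) + d = y⁻¹ • (C x + y • d) := by
          rw [map_smul, smul_add, smul_smul, inv_mul_cancel₀ hypos.ne', one_smul]
        rw [this]
        exact hKcone _ (inv_nonneg.mpr hypos.le) _ hxy, by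
        show y • (y⁻¹ • x) = x
        rw [smul_smul, mul_inv_cancel₀ hypos.ne', one_smul]⟩
end

section
/- Let A be a real m × n matrix, let b ∈ ℝᵐ, and let X = {x ∈ ℝⁿ : A x ≤ b componentwise} be nonempty and bounded. Then {(x, y) ∈ ℝⁿ × ℝ : y ≥ 0 and x ∈ y • X} = {(x, y) ∈ ℝⁿ × ℝ : y ≥ 0 and A x ≤ y • b componentwise}. -/
open Pointwise

/-- The homogenization of a nonempty bounded polyhedron `X = {x : A x ≤ b}` is the
polyhedral cone `{(x, y) : y ≥ 0 and A x ≤ y • b}`. -/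
theorem homogenization_of_compact_polyhedron {m n : ℕ}
    (A : Matrix (Fin m) (Fin n) ℝ) (b : Fin m → ℝ)
    (hne : {x : Fin n → ℝ | ∀ i, A.mulVec x i ≤ b i}.Nonempty)
    (hbd : Bornology.IsBounded {x : Fin n → ℝ | ∀ i, A.mulVec x i ≤ b i}) :
    {p : (Fin n → ℝ) × ℝ | 0 ≤ p.2 ∧
        p.1 ∈ p.2 • {x : Fin n → ℝ | ∀ i, A.mulVec x i ≤ b i}} =
      {p : (Fin n → ℝ) × ℝ | 0 ≤ p.2 ∧ ∀ i, A.mulVec p.1 i ≤ (p.2 • b) i} := by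
  ext ⟨x, y⟩
  simp only [Set.mem_setOf_eq]
  constructor
  · rintro ⟨hy, z, hz, rfl⟩
    refine ⟨hy, fun i => ?_⟩
    rw [Matrix.mulVec_smul]
    simp only [Pi.smul_apply, smul_eq_mul]
    exact mul_le_mul_of_nonneg_left (hz i) hy
  · rintro ⟨hy, h⟩
    refine ⟨hy, ?_⟩
    rcases eq_or_lt_of_le hy with hy0 | hy0
    · -- y = 0
      subst hy0
      rw [Set.zero_smul_set hne]
      -- show x = 0
      have hx0 : x = 0 := by
        by_contra hx
        obtain ⟨x₀, hx₀⟩ := hne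
        obtain ⟨C, hC⟩ := hbd.exists_norm_le
        set t : ℝ := (C + ‖x₀‖ + 1) / ‖x‖ with ht
        have hxn : (0:ℝ) < ‖x‖ := norm_pos_iff.mpr hx
        have hCnn : 0 ≤ C := le_trans (norm_nonneg x₀) (hC x₀ hx₀)
        have ht0 : 0 ≤ t := by positivity
        have hmem : x₀ + t • x ∈ {x : Fin n → ℝ | ∀ i, A.mulVec x i ≤ b i} := by
          intro i
          rw [Matrix.mulVec_add, Matrix.mulVec_smul]
          have h2 : t * A.mulVec x i ≤ 0 := by
            have := h i
            simp only [zero_smul, Pi.zero_apply] at this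
            exact mul_nonpos_of_nonneg_of_nonpos ht0 this
          have := hx₀ i
          simp only [Pi.add_apply, Pi.smul_apply, smul_eq_mul]
          linarith
        have hnorm := hC _ hmem
        have h3 : ‖t • x‖ ≤ ‖x₀ + t • x‖ + ‖x₀‖ := by
          have := norm_sub_le (x₀ + t • x) x₀
          rwa [add_sub_cancel_left] at this
        rw [norm_smul, Real.norm_eq_abs, abs_of_nonneg ht0] at h3
        have h4 : t * ‖x‖ = C + ‖x₀‖ + 1 := by
          rw [ht]; field_simp
        linarith
      rw [hx0]; exact Set.zero_mem_zero
    · refine ⟨y⁻¹ • x, fun i => ?_, ?_⟩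
      · rw [Matrix.mulVec_smul]
        have := h i
        simp only [Pi.smul_apply, smul_eq_mul] at this ⊢
        rw [inv_mul_le_iff₀ hy0]
        linarith [this]
      · show y • (y⁻¹ • x) = x
        rw [smul_smul, mul_inv_cancel₀ (ne_of_gt hy0), one_smul]
end

section
/- Let X ⊆ ℝⁿ be a nonempty, closed, convex set, and let f : ℝⁿ → ℝ be a convex function such that for every nonzero recession direction x of X, the quotient f(t • x) / t tends to +∞ as t → +∞. Define X' = {(x, s) ∈ ℝⁿ × ℝ : x ∈ X and s ≥ f(x)}. Then every recession direction (x, s) of X' satisfies x = 0 and s ≥ 0. -/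
/-- `x` is a recession direction of `S`: `p + t • x ∈ S` for all `p ∈ S` and `t ≥ 0`. -/
def IsRecessionDirection {V : Type*} [AddCommMonoid V] [Module ℝ V]
    (S : Set V) (x : V) : Prop :=
  ∀ p ∈ S, ∀ t : ℝ, 0 ≤ t → p + t • x ∈ S

/-- Consequence of the superlinear-growth assumption (Assumption 3): every recession
direction `(x, s)` of the epigraph set `X' = {(x, s) : x ∈ X, s ≥ f x}` satisfies
`x = 0` and `s ≥ 0`. -/
theorem epigraph_recession_directions {n : ℕ} (X : Set (Fin n → ℝ))
    (hne : X.Nonempty) (hcl : IsClosed X) (hconv : Convex ℝ X)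
    (f : (Fin n → ℝ) → ℝ) (hf : ConvexOn ℝ Set.univ f)
    (hgrowth : ∀ x : Fin n → ℝ, IsRecessionDirection X x → x ≠ 0 →
      Filter.Tendsto (fun t : ℝ => f (t • x) / t) Filter.atTop Filter.atTop)
    (p : (Fin n → ℝ) × ℝ)
    (hp : IsRecessionDirection {q : (Fin n → ℝ) × ℝ | q.1 ∈ X ∧ f q.1 ≤ q.2} p) :
    p.1 = 0 ∧ 0 ≤ p.2 := by
  obtain ⟨p0, hp0⟩ := hne
  obtain ⟨v, s⟩ := p
  simp only
  have hmem : (p0, f p0) ∈ {q : (Fin n → ℝ) × ℝ | q.1 ∈ X ∧ f q.1 ≤ q.2} :=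
    ⟨hp0, le_refl _⟩
  have key : ∀ t : ℝ, 0 ≤ t → p0 + t • v ∈ X ∧ f (p0 + t • v) ≤ f p0 + t * s := by
    intro t ht
    have h := hp _ hmem t ht
    simpa [Prod.smul_def] using h
  have hv : v = 0 := by
    by_contra hv
    have hrec : IsRecessionDirection X v := by
      intro q hq t ht
      exact (hp (q, f q) ⟨hq, le_refl _⟩ t ht).1
    have htend := hgrowth v hrec hv
    set C := (f p0 + f (-p0)) / 2 with hC
    have hbound : ∀ t : ℝ, 1 ≤ t → f (t • v) / t ≤ s + |C| := by
      intro t ht1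
      have ht0 : (0:ℝ) < t := lt_of_lt_of_le one_pos ht1
      have h2t : (0:ℝ) ≤ 2 * t := by linarith
      have hkey := (key (2 * t) h2t).2
      have hconvf := hf.2 (Set.mem_univ (p0 + (2 * t) • v)) (Set.mem_univ (-p0))
        (by norm_num : (0:ℝ) ≤ 1/2) (by norm_num : (0:ℝ) ≤ 1/2) (by norm_num)
      have heq : (1/2 : ℝ) • (p0 + (2 * t) • v) + (1/2 : ℝ) • (-p0) = t • v := by
        module
      rw [heq] at hconvf
      have h2 : f (t • v) ≤ (s + |C|) * t := by
        have hCle : C ≤ |C| := le_abs_self C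
        have hCnn : 0 ≤ |C| := abs_nonneg C
        simp only [smul_eq_mul] at hconvf
        nlinarith [hconvf, hkey, mul_le_mul_of_nonneg_left ht1 hCnn]
      exact (div_le_iff₀ ht0).mpr h2
    obtain ⟨t, ht, ht1⟩ :=
      ((htend.eventually (Filter.eventually_gt_atTop (s + |C|))).and
        (Filter.eventually_ge_atTop 1)).exists
    have := hbound t ht1
    linarith
  subst hv
  refine ⟨rfl, ?_⟩
  have h := (key 1 zero_le_one).2
  simp at h
  linarith
end

section
/- Let X ⊆ ℝⁿ be a nonempty, closed, convex set, and let X̃ denote the topological closure of the set {(x, y) ∈ ℝⁿ × ℝ : y ≥ 0 and x ∈ y • X}. Then for every x ∈ ℝⁿ, (x, 0) ∈ X̃ if and only if x is a recession direction of X. -/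
open Pointwise

/-- Zero-level slice of the homogenization of a nonempty closed convex set: `(x, 0)`
belongs to the homogenization if and only if `x` is a recession direction of `X`. -/
theorem homogenization_zero_slice {n : ℕ} (X : Set (Fin n → ℝ))
    (hne : X.Nonempty) (hcl : IsClosed X) (hconv : Convex ℝ X) (x : Fin n → ℝ) :
    (x, (0 : ℝ)) ∈ closure {p : (Fin n → ℝ) × ℝ | 0 ≤ p.2 ∧ p.1 ∈ p.2 • X} ↔
      IsRecessionDirection X x := by
  constructor
  · intro hx
    rw [mem_closure_iff_seq_limit] at hx
    obtain ⟨f, hf, hlim⟩ := hx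
    intro p hp t ht
    have hy : Filter.Tendsto (fun k => (f k).2) Filter.atTop (nhds 0) :=
      (continuous_snd.tendsto _).comp hlim
    have hx1 : Filter.Tendsto (fun k => (f k).1) Filter.atTop (nhds x) :=
      (continuous_fst.tendsto _).comp hlim
    have hty : Filter.Tendsto (fun k => t * (f k).2) Filter.atTop (nhds 0) := by
      simpa using hy.const_mul t
    have hev : ∀ᶠ k in Filter.atTop, t * (f k).2 ≤ 1 := by
      have := hty.eventually (eventually_le_nhds (by norm_num : (0:ℝ) < 1))
      exact this
    -- the approximating sequence
    have hg : Filter.Tendsto (fun k => p + t • ((f k).1 - (f k).2 • p))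
        Filter.atTop (nhds (p + t • x)) := by
      have : Filter.Tendsto (fun k => (f k).1 - (f k).2 • p) Filter.atTop
          (nhds x) := by
        have := hx1.sub (hy.smul_const p)
        simpa using this
      exact tendsto_const_nhds.add (this.const_smul t)
    refine hcl.mem_of_tendsto hg ?_
    filter_upwards [hev] with k hk
    obtain ⟨hk2, z, hz, hzx⟩ := hf k
    have hyk : 0 ≤ (f k).2 := hk2
    have h1 : p + t • ((f k).1 - (f k).2 • p)
        = (1 - t * (f k).2) • p + (t * (f k).2) • z := by
      rw [← hzx]; module
    rw [h1]
    exact hconv hp hz (by linarith) (by positivity) (by ring)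
  · intro hrec
    obtain ⟨p₀, hp₀⟩ := hne
    rw [mem_closure_iff_seq_limit]
    refine ⟨fun k => (x + (1 / (k + 1 : ℝ)) • p₀, 1 / (k + 1 : ℝ)), ?_, ?_⟩
    · intro k
      have hk : (0:ℝ) < 1 / (k + 1 : ℝ) := by positivity
      refine ⟨hk.le, ?_⟩
      refine ⟨p₀ + (k + 1 : ℝ) • x, hrec p₀ hp₀ _ (by positivity), ?_⟩
      have hne' : (k + 1 : ℝ) ≠ 0 := by positivity
      show (1 / (k + 1 : ℝ)) • (p₀ + (k + 1 : ℝ) • x) = x + (1 / (k + 1 : ℝ)) • p₀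
      rw [smul_add, smul_smul, one_div_mul_cancel hne', one_smul]
      abel
    · have h0 : Filter.Tendsto (fun k : ℕ => 1 / (k + 1 : ℝ)) Filter.atTop (nhds 0) :=
        tendsto_one_div_add_atTop_nhds_zero_nat
      have hx1 : Filter.Tendsto (fun k : ℕ => x + (1 / (k + 1 : ℝ)) • p₀)
          Filter.atTop (nhds x) := by
        have := (h0.smul_const p₀)
        simpa using tendsto_const_nhds.add this
      exact hx1.prodMk_nhds h0
end

section
/- Let X ⊆ ℝⁿ be a closed set, and let X̃ denote the topological closure of the set {(x, y) ∈ ℝⁿ × ℝ : y ≥ 0 and x ∈ y • X}. Then for every x ∈ ℝⁿ, (x, 1) ∈ X̃ if and only if x ∈ X. -/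
open Pointwise

/-- Unit-level slice of the homogenization of a closed set: `(x, 1)` belongs to the
homogenization if and only if `x ∈ X`. -/
theorem homogenization_one_slice {n : ℕ} (X : Set (Fin n → ℝ))
    (hcl : IsClosed X) (x : Fin n → ℝ) :
    (x, (1 : ℝ)) ∈ closure {p : (Fin n → ℝ) × ℝ | 0 ≤ p.2 ∧ p.1 ∈ p.2 • X} ↔
      x ∈ X := by
  constructor
  · intro h
    obtain ⟨u, hu, hlim⟩ := mem_closure_iff_seq_limit.1 h
    have h2 : Filter.Tendsto (fun k => (u k).2) Filter.atTop (nhds 1) :=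
      (continuous_snd.tendsto _).comp hlim
    have h1 : Filter.Tendsto (fun k => (u k).1) Filter.atTop (nhds x) :=
      (continuous_fst.tendsto _).comp hlim
    have hpos : ∀ᶠ k in Filter.atTop, (u k).2 ≠ 0 := by
      filter_upwards [h2.eventually_ne one_ne_zero] with k hk using hk
    have hinv : Filter.Tendsto (fun k => ((u k).2)⁻¹) Filter.atTop (nhds 1) := by
      simpa using h2.inv₀ one_ne_zero
    have hv : Filter.Tendsto (fun k => ((u k).2)⁻¹ • (u k).1) Filter.atTop (nhds x) := by
      simpa using hinv.smul h1
    refine hcl.mem_of_tendsto hv ?_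
    filter_upwards [hpos] with k hk
    exact (Set.mem_smul_set_iff_inv_smul_mem₀ hk _ _).1 (hu k).2
  · intro hx
    exact subset_closure ⟨zero_le_one, by simpa using Set.smul_mem_smul_set (a := (1:ℝ)) hx⟩
end
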